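/- For α > 0, real E > E_*(ℓ) and ℓ > −1/2, the function I(E,ℓ) = (1/π) ∫_{x₋}^{x₊} √(E − x^{2α} − (ℓ+1/2)²/x²) dx, where x₋ < x₊ are the two positive zeros of E − x^{2α} − (ℓ+1/2)²/x², is strictly increasing in E; consequently, for every n ∈ ℕ the Bohr–Sommerfeld equation I(E,ℓ) = n + 1/2 has exactly one solution E = Ê_n(ℓ) in (E_*(ℓ), ∞), provided I(E,ℓ) → ∞ as E → ∞ and I(E,ℓ) → 0 as E → E_*(ℓ)⁺. -/

import Mathlib

/-! The potential `V x = x^{2α} + (ℓ+1/2)²/x²` is continuous on `(0, ∞)` and tends to `+∞` at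
both ends, so by the intermediate value theorem `{V < E}` is exactly the open interval between the
two turning points. Hence the turning-point intervals grow with `E`, and the actions at `E₁ < E₂`
can both be written as integrals over `[x₋(E₂), x₊(E₂)]`, where `√(E - V)` increases with `E`,
strictly at `x₋(E₁)`. The same rewriting makes `I` locally an integral over a fixed interval, hence
continuous, and the equation `I = n + 1/2` is solved by the intermediate value theorem. -/

open Set Filter intervalIntegral

/-- The critical energy `E_*(ℓ)`. -/
noncomputable def Estar12 (α ℓ : ℝ) : ℝ :=
  α ^ (-α / (1 + α)) * (1 + α) * (ℓ + 1/2) ^ (2 * α / (1 + α))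

/-- The WKB action integral
`I(E,ℓ) = (1/π)∫_{x₋(E)}^{x₊(E)} √(E − x^{2α} − (ℓ+1/2)²/x²) dx`. -/
noncomputable def Ifun12 (α ℓ : ℝ) (xm xp : ℝ → ℝ) (E : ℝ) : ℝ :=
  (1 / Real.pi) * ∫ x in xm E..xp E, Real.sqrt (E - x ^ (2 * α) - (ℓ + 1/2) ^ 2 / x ^ 2)

open Topology
open scoped Interval

theorem IsPreconnected.forall_lt_of_forall_ne {X δ : Type*} [TopologicalSpace X]
    [LinearOrder δ] [TopologicalSpace δ] [OrderClosedTopology δ] {s : Set X}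
    (hs : IsPreconnected s) {f : X → δ} (hf : ContinuousOn f s) {c : δ}
    (hne : ∀ x ∈ s, f x ≠ c) {y : X} (hy : y ∈ s) (hcy : c < f y) : ∀ x ∈ s, c < f x := by
  intro x hx
  by_contra! hxc
  obtain ⟨z, hz, hfz⟩ := hs.intermediate_value hx hy hf ⟨hxc, hcy.le⟩
  exact hne z hz hfz

theorem StrictMonoOn.existsUnique_eq_of_tendsto {α δ : Type*}
    [ConditionallyCompleteLinearOrder α] [TopologicalSpace α] [OrderTopology α]
    [DenselyOrdered α] [NoMaxOrder α] [LinearOrder δ] [TopologicalSpace δ]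
    [OrderClosedTopology δ] {f : α → δ} {a : α} {L y : δ}
    (hmono : StrictMonoOn f (Ioi a)) (hcont : ContinuousOn f (Ioi a))
    (hbot : Tendsto f (𝓝[>] a) (𝓝 L)) (htop : Tendsto f atTop atTop) (hy : L < y) :
    ∃! x, x ∈ Ioi a ∧ f x = y := by
  obtain ⟨x₁, hfx₁, hx₁⟩ :=
    ((hbot.eventually (Iio_mem_nhds hy)).and self_mem_nhdsWithin).exists
  obtain ⟨x₂, hfx₂, hx₁₂⟩ :=
    ((htop.eventually_ge_atTop y).and (eventually_gt_atTop x₁)).exists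
  obtain ⟨x, hx, hfx⟩ :=
    hcont.surjOn_Icc hx₁ (mem_Ioi.2 (hx₁.trans hx₁₂)) ⟨hfx₁.le, hfx₂⟩
  exact ⟨x, ⟨hx, hfx⟩, fun x' ⟨hx', hfx'⟩ => hmono.injOn hx' hx (hfx'.trans hfx.symm)⟩

theorem continuous_intervalIntegral_sqrt_sub {V : ℝ → ℝ} {c d : ℝ}
    (hV : ContinuousOn V [[c, d]]) :
    Continuous fun E => ∫ x in c..d, √(E - V x) := by
  refine continuous_iff_continuousAt.2 fun E₀ => continuousAt_of_dominated_interval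
    (bound := fun x => √(E₀ + 1 - V x)) ?_ ?_ ?_ ?_
  · exact Eventually.of_forall fun E =>
      ((continuousOn_const.sub hV).sqrt.aestronglyMeasurable measurableSet_uIcc).mono_set
        uIoc_subset_uIcc
  · filter_upwards [Iio_mem_nhds (lt_add_one E₀)] with E (hE : E < E₀ + 1)
    refine Eventually.of_forall fun x _ => ?_
    rw [Real.norm_of_nonneg (Real.sqrt_nonneg _)]
    exact Real.sqrt_le_sqrt (by linarith)
  · exact (continuousOn_const.sub hV).sqrt.intervalIntegrable
  · exact Eventually.of_forall fun x _ => by fun_prop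

structure IsConfiningPotential (V : ℝ → ℝ) : Prop where
  continuousOn : ContinuousOn V (Ioi 0)
  tendsto_nhdsGT_zero : Tendsto V (𝓝[>] 0) atTop
  tendsto_atTop : Tendsto V atTop atTop

structure IsTurningPair (V : ℝ → ℝ) (E a b : ℝ) : Prop where
  pos : 0 < a
  lt : a < b
  left : V a = E
  right : V b = E
  eq_or_eq : ∀ x, 0 < x → V x = E → x = a ∨ x = b

theorem isConfiningPotential_rpow_add_div_sq {p c : ℝ} (hp : 0 < p) (hc : 0 < c) :
    IsConfiningPotential fun x => x ^ p + c / x ^ 2 where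
  continuousOn :=
    (continuousOn_id.rpow_const fun x hx => Or.inl (ne_of_gt hx)).add
      (continuousOn_const.div (continuousOn_pow 2) fun x hx => pow_ne_zero 2 (ne_of_gt hx))
  tendsto_nhdsGT_zero := by
    refine tendsto_atTop_mono' _ ?_
      (((tendsto_pow_atTop two_ne_zero).comp tendsto_inv_nhdsGT_zero).const_mul_atTop hc)
    filter_upwards [self_mem_nhdsWithin] with x (hx : 0 < x)
    simp only [Function.comp, inv_pow, ← div_eq_mul_inv]
    linarith [Real.rpow_nonneg hx.le p]
  tendsto_atTop :=
    tendsto_atTop_mono (fun x => le_add_of_nonneg_right (by positivity)) (tendsto_rpow_atTop hp)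

namespace IsTurningPair

variable {V : ℝ → ℝ} {E a b : ℝ}

theorem lt_apply_of_lt_left (h : IsTurningPair V E a b) (hV : IsConfiningPotential V) {x : ℝ}
    (hx : 0 < x) (hxa : x < a) : E < V x := by
  obtain ⟨y, hEy, hy⟩ :=
    ((hV.tendsto_nhdsGT_zero.eventually_gt_atTop E).and (Ioo_mem_nhdsGT h.pos)).exists
  refine isPreconnected_Ioo.forall_lt_of_forall_ne (hV.continuousOn.mono Ioo_subset_Ioi_self)
    (fun z hz hVz => ?_) hy hEy x ⟨hx, hxa⟩
  rcases h.eq_or_eq z hz.1 hVz with rfl | rfl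
  exacts [hz.2.false, (hz.2.trans h.lt).false]

theorem lt_apply_of_right_lt (h : IsTurningPair V E a b) (hV : IsConfiningPotential V) {x : ℝ}
    (hx : b < x) : E < V x := by
  obtain ⟨y, hEy, hy⟩ :=
    ((hV.tendsto_atTop.eventually_gt_atTop E).and (eventually_gt_atTop b)).exists
  refine isPreconnected_Ioi.forall_lt_of_forall_ne
    (hV.continuousOn.mono (Ioi_subset_Ioi (h.pos.trans h.lt).le)) (fun z hz hVz => ?_) hy hEy
    x hx
  rcases h.eq_or_eq z (h.pos.trans (h.lt.trans hz)) hVz with rfl | rfl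
  exacts [(h.lt.trans hz.out).false, hz.out.false]

theorem mem_Ioo_of_lt (h : IsTurningPair V E a b) (hV : IsConfiningPotential V) {x : ℝ}
    (hx : 0 < x) (hVx : V x < E) : x ∈ Ioo a b := by
  by_contra hout
  rcases not_and_or.1 hout with hxa | hbx
  · rcases (not_lt.1 hxa).lt_or_eq with hxa | rfl
    · exact (h.lt_apply_of_lt_left hV hx hxa).not_gt hVx
    · exact hVx.ne h.left
  · rcases (not_lt.1 hbx).lt_or_eq with hbx | rfl
    · exact (h.lt_apply_of_right_lt hV hbx).not_gt hVx
    · exact hVx.ne h.right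

theorem Icc_subset_Ioo {E' a' b' : ℝ} (h : IsTurningPair V E a b) (hV : IsConfiningPotential V)
    (h' : IsTurningPair V E' a' b') (hE : E < E') : Icc a b ⊆ Ioo a' b' :=
  Set.Icc_subset_Ioo (h'.mem_Ioo_of_lt hV h.pos (h.left ▸ hE)).1
    (h'.mem_Ioo_of_lt hV (h.pos.trans h.lt) (h.right ▸ hE)).2

theorem integral_sqrt_sub_eq (h : IsTurningPair V E a b) (hV : IsConfiningPotential V)
    {c d : ℝ} (hc : 0 < c) (hca : c ≤ a) (hbd : b ≤ d) :
    ∫ x in c..d, √(E - V x) = ∫ x in a..b, √(E - V x) := by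
  rw [integral_of_le (hca.trans (h.lt.le.trans hbd)), integral_of_le h.lt.le]
  refine MeasureTheory.setIntegral_eq_of_subset_of_forall_sdiff_eq_zero measurableSet_Ioc
    (Ioc_subset_Ioc hca hbd) fun x ⟨hx, hxab⟩ => Real.sqrt_eq_zero_of_nonpos ?_
  by_contra! hVx
  exact hxab (Ioo_subset_Ioc_self (h.mem_Ioo_of_lt hV (hc.trans hx.1) (sub_pos.1 hVx)))

end IsTurningPair

noncomputable def wkbAction (V : ℝ → ℝ) (xm xp : ℝ → ℝ) (E : ℝ) : ℝ :=
  ∫ x in xm E..xp E, √(E - V x)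

section wkbAction

variable {V : ℝ → ℝ} {xm xp : ℝ → ℝ} {E₀ : ℝ}

theorem wkbAction_eq_integral (hV : IsConfiningPotential V)
    (hturn : ∀ E, E₀ < E → IsTurningPair V E (xm E) (xp E)) {E E' : ℝ} (hE : E₀ < E)
    (hEE' : E < E') : wkbAction V xm xp E = ∫ x in xm E'..xp E', √(E - V x) := by
  have h := hturn E hE
  have h' := hturn E' (hE.trans hEE')
  have hsub := h.Icc_subset_Ioo hV h' hEE'
  exact (h.integral_sqrt_sub_eq hV h'.pos (hsub (left_mem_Icc.2 h.lt.le)).1.le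
    (hsub (right_mem_Icc.2 h.lt.le)).2.le).symm

theorem strictMonoOn_wkbAction (hV : IsConfiningPotential V)
    (hturn : ∀ E, E₀ < E → IsTurningPair V E (xm E) (xp E)) :
    StrictMonoOn (wkbAction V xm xp) (Ioi E₀) := by
  intro E₁ hE₁ E₂ hE₂ hE
  have h₁ := hturn E₁ hE₁
  have h₂ := hturn E₂ hE₂
  have hcont (E : ℝ) : ContinuousOn (fun x => √(E - V x)) (Icc (xm E₂) (xp E₂)) :=
    (continuousOn_const.sub (hV.continuousOn.mono fun x hx => h₂.pos.trans_le hx.1)).sqrt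
  have hxm : xm E₁ ∈ Icc (xm E₂) (xp E₂) :=
    Ioo_subset_Icc_self (h₁.Icc_subset_Ioo hV h₂ hE (left_mem_Icc.2 h₁.lt.le))
  rw [wkbAction_eq_integral hV hturn hE₁ hE, wkbAction]
  refine integral_lt_integral_of_continuousOn_of_le_of_exists_lt h₂.lt (hcont E₁) (hcont E₂)
    (fun x _ => Real.sqrt_le_sqrt (by linarith)) ⟨xm E₁, hxm, ?_⟩
  rw [h₁.left, sub_self, Real.sqrt_zero]
  exact Real.sqrt_pos.2 (sub_pos.2 hE)

theorem continuousOn_wkbAction (hV : IsConfiningPotential V)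
    (hturn : ∀ E, E₀ < E → IsTurningPair V E (xm E) (xp E)) :
    ContinuousOn (wkbAction V xm xp) (Ioi E₀) := by
  intro E hE
  have hB := hturn (E + 1) (hE.out.trans (lt_add_one E))
  have hcont : Continuous fun E' => ∫ x in xm (E + 1)..xp (E + 1), √(E' - V x) :=
    continuous_intervalIntegral_sqrt_sub <| hV.continuousOn.mono fun x hx =>
      hB.pos.trans_le (uIcc_of_le hB.lt.le ▸ hx).1
  refine (hcont.continuousAt.congr ?_).continuousWithinAt
  filter_upwards [Ioo_mem_nhds hE (lt_add_one E)] with E' hE'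
  exact (wkbAction_eq_integral hV hturn hE'.1 hE'.2).symm

end wkbAction

/-- The WKB integral `I(·,ℓ)` is strictly increasing on `(E_*,∞)`; consequently, if
`I → ∞` as `E → ∞` and `I → 0` as `E → E_*⁺`, then for every `n ∈ ℕ` the
Bohr–Sommerfeld equation `I(E,ℓ) = n + 1/2` has exactly one solution in `(E_*,∞)`. -/
theorem stmt12 (α ℓ : ℝ) (hα : 0 < α) (hℓ : -1/2 < ℓ)
    (xm xp : ℝ → ℝ)
    (hroots : ∀ E : ℝ, Estar12 α ℓ < E →
      0 < xm E ∧ xm E < xp E ∧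
      E - (xm E) ^ (2 * α) - (ℓ + 1/2) ^ 2 / (xm E) ^ 2 = 0 ∧
      E - (xp E) ^ (2 * α) - (ℓ + 1/2) ^ 2 / (xp E) ^ 2 = 0 ∧
      ∀ x : ℝ, 0 < x → E - x ^ (2 * α) - (ℓ + 1/2) ^ 2 / x ^ 2 = 0 →
        x = xm E ∨ x = xp E) :
    StrictMonoOn (Ifun12 α ℓ xm xp) (Ioi (Estar12 α ℓ)) ∧
    (Tendsto (Ifun12 α ℓ xm xp) atTop atTop →
     Tendsto (Ifun12 α ℓ xm xp) (nhdsWithin (Estar12 α ℓ) (Ioi (Estar12 α ℓ))) (nhds 0) →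
     ∀ n : ℕ, ∃! E : ℝ, E ∈ Ioi (Estar12 α ℓ) ∧
       Ifun12 α ℓ xm xp E = (n : ℝ) + 1/2) := by
  set V : ℝ → ℝ := fun x => x ^ (2 * α) + (ℓ + 1/2) ^ 2 / x ^ 2
  have hV : IsConfiningPotential V :=
    isConfiningPotential_rpow_add_div_sq (by positivity) (by nlinarith)
  have hturn (E : ℝ) (hE : Estar12 α ℓ < E) : IsTurningPair V E (xm E) (xp E) := by
    obtain ⟨hpos, hlt, hleft, hright, honly⟩ := hroots E hE
    rw [sub_sub, sub_eq_zero] at hleft hright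
    refine ⟨hpos, hlt, hleft.symm, hright.symm, fun x hx hVx => honly x hx ?_⟩
    rw [sub_sub, ← hVx, sub_self]
  have hI : Ifun12 α ℓ xm xp = fun E => Real.pi⁻¹ * wkbAction V xm xp E := by
    ext E
    simp only [Ifun12, wkbAction, V, sub_sub, one_div]
  have hmono : StrictMonoOn (Ifun12 α ℓ xm xp) (Ioi (Estar12 α ℓ)) :=
    hI ▸ (strictMono_mul_left_of_pos (inv_pos.2 Real.pi_pos)).comp_strictMonoOn
      (strictMonoOn_wkbAction hV hturn)
  have hcont : ContinuousOn (Ifun12 α ℓ xm xp) (Ioi (Estar12 α ℓ)) :=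
    hI ▸ (continuousOn_wkbAction hV hturn).const_smul Real.pi⁻¹
  exact ⟨hmono, fun htop hbot n =>
    hmono.existsUnique_eq_of_tendsto hcont hbot htop (by positivity)⟩
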